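/- arXiv:2002.07416 — 2 statements merged into one kernel-verified Lean document; each statement's English description precedes it below -/
import Mathlib

section
/- Let λ_i > 0, z_{i0} ∈ ℝ, z0 ∈ l^2 with ||z0|| > 0, ρ > σ > 0, and let v_i : [0,∞) → ℝ be measurable. Define T_i = (1/λ_i)·ln(λ_i||z0||/(ρ-σ) + 1) and the pursuer control u_i(t) = -(z_{i0}/||z0||)(ρ-σ) + v_i(t) for 0 ≤ t ≤ T_i and u_i(t) = v_i(t) for t > T_i. Then the solution z_i(t) = e^{-λ_i t}[z_{i0} + ∫_0^t e^{λ_i s}(u_i(s) - v_i(s)) ds] of ż_i = -λ_i z_i + u_i - v_i with z_i(0) = z_{i0} satisfies z_i(t) = 0 for all t ≥ T_i. -/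
/-- The pursuer strategy brings coordinate i to zero for all t ≥ T_i. -/
theorem stmt2 (lam zi0 N ρ σ : ℝ) (hlam : 0 < lam) (hN : 0 < N)
    (hσ : 0 < σ) (hρσ : σ < ρ)
    (v : ℝ → ℝ) (hv : Measurable v)
    (Ti : ℝ) (hTi : Ti = (1 / lam) * Real.log (lam * N / (ρ - σ) + 1))
    (u : ℝ → ℝ)
    (hu : ∀ t, u t = if t ≤ Ti then -(zi0 / N) * (ρ - σ) + v t else v t)
    (z : ℝ → ℝ)
    (hz : ∀ t, z t =
      Real.exp (-lam * t) * (zi0 + ∫ s in (0:ℝ)..t, Real.exp (lam * s) * (u s - v s))) :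
    ∀ t ≥ Ti, z t = 0 := by
  intro t ht
  set c : ℝ := -(zi0 / N) * (ρ - σ) with hc
  have hρσ' : (0:ℝ) < ρ - σ := by linarith
  have hfg : ∀ s, Real.exp (lam * s) * (u s - v s)
      = Set.indicator (Set.Iic Ti) (fun s => c * Real.exp (lam * s)) s := by
    intro s
    rw [hu s]
    by_cases h : s ≤ Ti
    · simp [h, Set.indicator_of_mem, Set.mem_Iic.mpr h]
      ring
    · simp [h, Set.indicator_of_notMem, Set.mem_Iic, h]
  have hint : ∀ a b : ℝ, IntervalIntegrable
      (fun s => Real.exp (lam * s) * (u s - v s)) MeasureTheory.volume a b := by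
    intro a b
    have : IntervalIntegrable
        (Set.indicator (Set.Iic Ti) (fun s => c * Real.exp (lam * s)))
        MeasureTheory.volume a b := by
      rw [intervalIntegrable_iff] at *
      exact ((Continuous.intervalIntegrable (by continuity : Continuous fun s => c * Real.exp (lam * s)) a b).def'.indicator measurableSet_Iic)
    simpa [funext hfg] using this
  have hsplit : (∫ s in (0:ℝ)..t, Real.exp (lam * s) * (u s - v s))
      = (∫ s in (0:ℝ)..Ti, Real.exp (lam * s) * (u s - v s))
        + ∫ s in Ti..t, Real.exp (lam * s) * (u s - v s) :=
    (intervalIntegral.integral_add_adjacent_intervals (hint 0 Ti) (hint Ti t)).symm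
  -- second integral is 0
  have h2 : (∫ s in Ti..t, Real.exp (lam * s) * (u s - v s)) = 0 := by
    have : (∫ s in Ti..t, Real.exp (lam * s) * (u s - v s))
        = ∫ s in Ti..t, (0:ℝ) := by
      apply intervalIntegral.integral_congr_ae
      filter_upwards with s hs
      have hs' : Ti < s := by
        rw [Set.uIoc_of_le ht] at hs
        exact hs.1
      rw [hu s, if_neg (not_le.mpr hs')]
      ring
    simp [this]
  -- first integral equals -zi0
  have hTipos : 0 < Ti := by
    rw [hTi]
    have h1 : (1:ℝ) < lam * N / (ρ - σ) + 1 := by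
      have : 0 < lam * N / (ρ - σ) := by positivity
      linarith
    have := Real.log_pos h1
    positivity
  have hexpTi : Real.exp (lam * Ti) = lam * N / (ρ - σ) + 1 := by
    rw [hTi]
    have : lam * (1 / lam * Real.log (lam * N / (ρ - σ) + 1))
        = Real.log (lam * N / (ρ - σ) + 1) := by
      field_simp
    rw [this, Real.exp_log]
    have : 0 < lam * N / (ρ - σ) := by positivity
    linarith
  have h1 : (∫ s in (0:ℝ)..Ti, Real.exp (lam * s) * (u s - v s)) = -zi0 := by
    have e1 : (∫ s in (0:ℝ)..Ti, Real.exp (lam * s) * (u s - v s))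
        = ∫ s in (0:ℝ)..Ti, c * Real.exp (lam * s) := by
      apply intervalIntegral.integral_congr
      intro s hs
      rw [Set.uIcc_of_le hTipos.le] at hs
      show Real.exp (lam * s) * (u s - v s) = c * Real.exp (lam * s)
      rw [hu s, if_pos hs.2]
      ring
    rw [e1, intervalIntegral.integral_const_mul]
    have e2 : (∫ s in (0:ℝ)..Ti, Real.exp (lam * s))
        = (Real.exp (lam * Ti) - Real.exp (lam * 0)) / lam := by
      rw [intervalIntegral.integral_comp_mul_left (fun x => Real.exp x) hlam.ne']
      simp [integral_exp]
      field_simp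
    rw [e2, hexpTi]
    simp only [mul_zero, Real.exp_zero, hc]
    field_simp
    ring
  rw [hz t, hsplit, h1, h2]
  ring
end

section
/- Let (λ_i) be positive reals with λ = inf_i λ_i > 0, z0 ∈ l^2 nonzero, ρ > σ > 0. For each admissible evader control v(t) = (v_1(t), v_2(t), ...) with ||v(t)|| ≤ σ for all t, the pursuer strategy u_i(t) = -(z_{i0}/||z0||)(ρ-σ) + v_i(t) for t ≤ T_i and u_i(t) = v_i(t) for t > T_i, where T_i = (1/λ_i)·ln(λ_i||z0||/(ρ-σ)+1), is admissible (||u(t)|| ≤ ρ for all t) and guarantees z_i(t) = 0 for all i and all t ≥ T = (1/λ)·ln(λ||z0||/(ρ-σ)+1). -/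
/-!
Coordinate `i` of the pursuer's control cancels the evader's and adds the constant push
`-(z0 i / ‖z0‖)(ρ - σ)` up to time `T i`; the push is dominated coordinatewise by
`(ρ - σ) z0 / ‖z0‖`, of ℓ² norm `ρ - σ`, so by Minkowski the control has norm at most `ρ`. Integrating the push against `exp (λ_i s)` over `[0, T i]` gives
exactly `-z0 i`, so `z i` vanishes from `T i` on, and `T ≥ T i` because
`x ↦ log (x c + 1) / x` is antitone on `(0, ∞)` (Bernoulli's inequality).
-/

open Real MeasureTheory Set

section SquareSummable

variable {ι : Type*}

lemma memℓp_two_iff_summable_sq {f : ι → ℝ} : Memℓp f 2 ↔ Summable fun i => f i ^ 2 := by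
  rw [memℓp_gen_iff (by norm_num)]
  norm_num [sq_abs]

lemma lp.norm_two_eq_sqrt_tsum_sq (f : lp (fun _ : ι => ℝ) 2) : ‖f‖ = √(∑' i, f i ^ 2) := by
  rw [lp.norm_eq_tsum_rpow (by norm_num), sqrt_eq_rpow]
  norm_num [sq_abs]

lemma summable_sq_add_and_sqrt_tsum_sq_add_le {f g : ι → ℝ} (hf : Summable fun i => f i ^ 2)
    (hg : Summable fun i => g i ^ 2) :
    (Summable fun i => (f i + g i) ^ 2) ∧
      √(∑' i, (f i + g i) ^ 2) ≤ √(∑' i, f i ^ 2) + √(∑' i, g i ^ 2) := by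
  let F : lp (fun _ : ι => ℝ) 2 := ⟨f, memℓp_two_iff_summable_sq.2 hf⟩
  let G : lp (fun _ : ι => ℝ) 2 := ⟨g, memℓp_two_iff_summable_sq.2 hg⟩
  refine ⟨memℓp_two_iff_summable_sq.1 (F + G).2, ?_⟩
  simpa only [lp.norm_two_eq_sqrt_tsum_sq, lp.coeFn_add, Pi.add_apply] using norm_add_le F G

lemma sqrt_tsum_const_mul_sq (a : ℝ) (f : ι → ℝ) :
    √(∑' i, (a * f i) ^ 2) = |a| * √(∑' i, f i ^ 2) := by
  simp_rw [mul_pow, tsum_mul_left, sqrt_mul (sq_nonneg a), sqrt_sq_eq_abs]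

lemma summable_sq_of_abs_le {f g : ι → ℝ} (hg : Summable fun i => g i ^ 2)
    (h : ∀ i, |f i| ≤ |g i|) : Summable fun i => f i ^ 2 :=
  hg.of_nonneg_of_le (fun _ => sq_nonneg _) fun i => sq_le_sq.2 (h i)

lemma sqrt_tsum_sq_le_of_abs_le {f g : ι → ℝ} (hg : Summable fun i => g i ^ 2)
    (h : ∀ i, |f i| ≤ |g i|) : √(∑' i, f i ^ 2) ≤ √(∑' i, g i ^ 2) :=
  sqrt_le_sqrt <| (summable_sq_of_abs_le hg h).tsum_le_tsum (fun i => sq_le_sq.2 (h i)) hg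

end SquareSummable

lemma pursuer_control_admissible {ι : Type*} {z0 v u : ι → ℝ} {N ρ σ : ℝ}
    (hz0 : Summable fun i => z0 i ^ 2) (hN : N = √(∑' i, z0 i ^ 2)) (hNpos : 0 < N)
    (hρσ : σ < ρ) (hv : Summable fun i => v i ^ 2) (hvσ : √(∑' i, v i ^ 2) ≤ σ)
    (p : ι → Prop) [DecidablePred p]
    (hu : ∀ i, u i = if p i then -(z0 i / N) * (ρ - σ) + v i else v i) :
    (Summable fun i => u i ^ 2) ∧ √(∑' i, u i ^ 2) ≤ ρ := by
  set d : ι → ℝ := fun i => if p i then -(z0 i / N) * (ρ - σ) else 0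
  have hud : u = fun i => d i + v i := by
    funext i
    simp only [hu, d]
    split_ifs <;> ring
  have hd_le : ∀ i, |d i| ≤ |(ρ - σ) / N * z0 i| := fun i => by
    simp only [d]
    split_ifs
    · rw [show -(z0 i / N) * (ρ - σ) = -((ρ - σ) / N * z0 i) by ring, abs_neg]
    · rw [abs_zero]
      positivity
  have hpush_sum : Summable fun i => ((ρ - σ) / N * z0 i) ^ 2 := by
    simpa only [mul_pow] using hz0.mul_left _
  have hpush_norm : √(∑' i, ((ρ - σ) / N * z0 i) ^ 2) = ρ - σ := by
    rw [sqrt_tsum_const_mul_sq, ← hN, abs_of_pos (div_pos (sub_pos.2 hρσ) hNpos),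
      div_mul_cancel₀ _ hNpos.ne']
  have hd_norm := sqrt_tsum_sq_le_of_abs_le hpush_sum hd_le
  obtain ⟨hsum, hle⟩ :=
    summable_sq_add_and_sqrt_tsum_sq_add_le (summable_sq_of_abs_le hpush_sum hd_le) hv
  subst hud
  exact ⟨hsum, by linarith⟩

lemma one_div_mul_log_mul_add_one_le {a b c : ℝ} (ha : 0 < a) (hab : a ≤ b) (hc : 0 ≤ c) :
    1 / b * log (b * c + 1) ≤ 1 / a * log (a * c + 1) := by
  have hb : 0 < b := ha.trans_le hab
  have hbernoulli : 1 + b / a * (a * c) ≤ (1 + a * c) ^ (b / a) :=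
    one_add_mul_self_le_rpow_one_add (by nlinarith) ((one_le_div ha).2 hab)
  have hlog : log (b * c + 1) ≤ b / a * log (a * c + 1) := by
    rw [add_comm (a * c), ← log_rpow (by positivity)]
    refine log_le_log (by positivity) ?_
    calc b * c + 1 = 1 + b / a * (a * c) := by field_simp; ring
      _ ≤ _ := hbernoulli
  calc 1 / b * log (b * c + 1) ≤ 1 / b * (b / a * log (a * c + 1)) := by gcongr
    _ = 1 / a * log (a * c + 1) := by field_simp

lemma integral_exp_const_mul {c : ℝ} (hc : c ≠ 0) (a b : ℝ) :
    ∫ s in a..b, exp (c * s) = (exp (c * b) - exp (c * a)) / c := by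
  rw [intervalIntegral.integral_comp_mul_left (f := exp) hc, integral_exp, smul_eq_mul,
    inv_mul_eq_div]

lemma pursuit_coordinate_eq_zero {lam z0 N c T t : ℝ} {u v : ℝ → ℝ} (hlam : 0 < lam)
    (hN : 0 < N) (hc : 0 < c) (hT : T = 1 / lam * log (lam * N / c + 1)) (ht : T ≤ t)
    (hu : ∀ s, u s = if s ≤ T then -(z0 / N) * c + v s else v s) :
    exp (-lam * t) * (z0 + ∫ s in (0:ℝ)..t, exp (lam * s) * (u s - v s)) = 0 := by
  have hT0 : 0 ≤ T := hT ▸ mul_nonneg (by positivity) (log_nonneg (le_add_of_nonneg_left (by positivity)))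
  have hexpT : exp (lam * T) = lam * N / c + 1 := by
    rw [hT, ← mul_assoc, mul_one_div_cancel hlam.ne', one_mul, exp_log (by positivity)]
  have hpush : (fun s => exp (lam * s) * (u s - v s)) =
      {s | s ≤ T}.indicator fun s => exp (lam * s) * (-(z0 / N) * c) := by
    funext s
    simp only [indicator_apply, mem_ofPred_eq, hu]
    split_ifs <;> ring
  rw [hpush, intervalIntegral.integral_indicator ⟨hT0, ht⟩, intervalIntegral.integral_mul_const,
    integral_exp_const_mul hlam.ne', hexpT, mul_zero, exp_zero]
  field_simp
  ring

theorem stmt8_general (lam : ℕ → ℝ) (hlam : ∀ i, 0 < lam i)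
    (l : ℝ) (hl : l = ⨅ i, lam i) (hlpos : 0 < l)
    (z0 : ℕ → ℝ) (hz0 : Summable (fun i => (z0 i)^2)) (hz0ne : z0 ≠ 0)
    (N : ℝ) (hN : N = Real.sqrt (∑' i, (z0 i)^2))
    (ρ σ : ℝ) (hρσ : σ < ρ)
    (v : ℝ → ℕ → ℝ)
    (hvsum : ∀ t, Summable (fun i => (v t i)^2))
    (hvnorm : ∀ t, Real.sqrt (∑' i, (v t i)^2) ≤ σ)
    (T : ℕ → ℝ)
    (hT : ∀ i, T i = (1 / lam i) * Real.log (lam i * N / (ρ - σ) + 1))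
    (u : ℝ → ℕ → ℝ)
    (hu : ∀ t i, u t i =
      if t ≤ T i then -(z0 i / N) * (ρ - σ) + v t i else v t i)
    (z : ℝ → ℕ → ℝ)
    (hz : ∀ t i, z t i =
      Real.exp (-lam i * t) *
        (z0 i + ∫ s in (0:ℝ)..t, Real.exp (lam i * s) * (u s i - v s i)))
    (Tg : ℝ) (hTg : Tg = (1 / l) * Real.log (l * N / (ρ - σ) + 1)) :
    (∀ t, Summable (fun i => (u t i)^2) ∧ Real.sqrt (∑' i, (u t i)^2) ≤ ρ) ∧
    (∀ i, ∀ t ≥ Tg, z t i = 0) := by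
  obtain ⟨j, hj⟩ := Function.ne_iff.mp hz0ne
  have hNpos : 0 < N :=
    hN ▸ sqrt_pos.2 (hz0.tsum_pos (fun i => sq_nonneg _) j (sq_pos_of_ne_zero hj))
  refine ⟨fun t => pursuer_control_admissible hz0 hN hNpos hρσ (hvsum t) (hvnorm t) _ (hu t),
    fun i t ht => ?_⟩
  have hl_le : l ≤ lam i := hl ▸ ciInf_le ⟨0, forall_mem_range.2 fun j => (hlam j).le⟩ i
  have hTi : T i ≤ Tg := by
    rw [hT, hTg, mul_div_assoc, mul_div_assoc]
    exact one_div_mul_log_mul_add_one_le hlpos hl_le (div_nonneg hNpos.le (sub_pos.2 hρσ).le)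
  rw [hz]
  exact pursuit_coordinate_eq_zero (hlam i) hNpos (sub_pos.2 hρσ) (hT i) (hTi.trans ht)
    fun s => hu s i

/-- Main theorem: the pursuer strategy is admissible and guarantees capture
of every coordinate by time T = (1/λ)·ln(λ‖z0‖/(ρ-σ)+1), λ = inf λ_i. -/
theorem stmt8 (lam : ℕ → ℝ) (hlam : ∀ i, 0 < lam i)
    (l : ℝ) (hl : l = ⨅ i, lam i) (hlpos : 0 < l)
    (z0 : ℕ → ℝ) (hz0 : Summable (fun i => (z0 i)^2)) (hz0ne : z0 ≠ 0)
    (N : ℝ) (hN : N = Real.sqrt (∑' i, (z0 i)^2))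
    (ρ σ : ℝ) (hσ : 0 < σ) (hρσ : σ < ρ)
    (v : ℝ → ℕ → ℝ) (hvmeas : ∀ i, Measurable (fun t => v t i))
    (hvsum : ∀ t, Summable (fun i => (v t i)^2))
    (hvnorm : ∀ t, Real.sqrt (∑' i, (v t i)^2) ≤ σ)
    (T : ℕ → ℝ)
    (hT : ∀ i, T i = (1 / lam i) * Real.log (lam i * N / (ρ - σ) + 1))
    (u : ℝ → ℕ → ℝ)
    (hu : ∀ t i, u t i =
      if t ≤ T i then -(z0 i / N) * (ρ - σ) + v t i else v t i)
    (z : ℝ → ℕ → ℝ)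
    (hz : ∀ t i, z t i =
      Real.exp (-lam i * t) *
        (z0 i + ∫ s in (0:ℝ)..t, Real.exp (lam i * s) * (u s i - v s i)))
    (Tg : ℝ) (hTg : Tg = (1 / l) * Real.log (l * N / (ρ - σ) + 1)) :
    (∀ t, Summable (fun i => (u t i)^2) ∧ Real.sqrt (∑' i, (u t i)^2) ≤ ρ) ∧
    (∀ i, ∀ t ≥ Tg, z t i = 0) :=
  stmt8_general lam hlam l hl hlpos z0 hz0 hz0ne N hN ρ σ hρσ v hvsum hvnorm T hT u hu z hz Tg hTg
end
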